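/- Let F be a field of characteristic p > 0, G a finite group with p dividing |G|, and V a faithful G-module. Then topdeg F[V^m]_G ≥ m(p−1) for all positive integers m, where V^m is the direct sum of m copies of V. -/

import Mathlib

open MvPolynomial

variable {F G ι : Type*} [Field F] [Group G] [Fintype ι] [DecidableEq ι]

/-- The (left) action of a group element `σ` on the polynomial algebra
`F[V] = S(V^*)` presented as `MvPolynomial ι F`, for a matrix representation
`ρ : G →* GL(ι, F)` of `G` on `V = (ι → F)`.  It is given by `σ • f = f ∘ σ⁻¹`,
i.e. by linear substitution of the variables using the matrix of `ρ σ⁻¹`. -/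
noncomputable def polyAct (ρ : G →* (Matrix ι ι F)ˣ) (σ : G)
    (f : MvPolynomial ι F) : MvPolynomial ι F :=
  MvPolynomial.aeval
    (fun i => ∑ j, ((ρ σ⁻¹ : Matrix ι ι F) i j) • (MvPolynomial.X j : MvPolynomial ι F)) f

/-- A polynomial is invariant if it is fixed by the action of every group element. -/
def IsInv (ρ : G →* (Matrix ι ι F)ˣ) (f : MvPolynomial ι F) : Prop :=
  ∀ σ : G, polyAct ρ σ f = f

/-- The Hilbert ideal: the ideal of `F[V]` generated by the homogeneous invariants
of positive degree. -/
noncomputable def hilbertIdeal (ρ : G →* (Matrix ι ι F)ˣ) : Ideal (MvPolynomial ι F) :=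
  Ideal.span {f : MvPolynomial ι F | (∃ d, 0 < d ∧ f.IsHomogeneous d) ∧ IsInv ρ f}

/-- The top degree of the coinvariant algebra `F[V]_G = F[V]/(Hilbert ideal)`:
the largest degree `d` such that the degree-`d` homogeneous component of `F[V]_G`
is nonzero; since the Hilbert ideal is homogeneous this is the largest `d` for
which some homogeneous polynomial of degree `d` is not in the Hilbert ideal. -/
noncomputable def topDeg (ρ : G →* (Matrix ι ι F)ˣ) : ℕ :=
  sSup {d : ℕ | ∃ f : MvPolynomial ι F, f.IsHomogeneous d ∧ f ∉ hilbertIdeal ρ}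

/-- The dimension of the coinvariant algebra `F[V]_G` as an `F`-vector space. -/
noncomputable def coinvDim (ρ : G →* (Matrix ι ι F)ˣ) : ℕ :=
  Module.finrank F (MvPolynomial ι F ⧸ hilbertIdeal ρ)

/-- The representation of `G` on the direct sum `V^m` of `m` copies of `V`,
given by block diagonal matrices. -/
noncomputable def glPow (ρ : G →* (Matrix ι ι F)ˣ) (m : ℕ) :
    G →* (Matrix (ι × Fin m) (ι × Fin m) F)ˣ :=
  (Units.map (Matrix.blockDiagonalRingHom ι (Fin m) F).toMonoidHom).comp
    ((Units.map (Pi.constRingHom (Fin m) (Matrix ι ι F)).toMonoidHom).comp ρ)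

/-
Pick `σ ∈ G` of order `p`. Since `V` is faithful, `M = ρ σ⁻¹` is a unipotent matrix different from
`1`, so there are vectors `c, d` with `d ≠ 0`, `M c = c + d` and `M d = d`. Pulling polynomials on
`V^m` back along `(x, y) ↦ (x_k d + y_k c)_k` turns the action of `σ` into the shear
`x ↦ x + y, y ↦ y`. Differentiating `g(x + y, y) = g(x, y)` in `y_k` and setting `y = 0` shows
that `g(x, 0)` has vanishing partial derivatives, so in characteristic `p` each of its nonconstant
monomials is divisible by some `x_k^p`. Hence `f ↦ f((x_k d)_k)` maps the Hilbert ideal into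
`(x_1^p, …, x_m^p)`, whereas it maps `∏_k X_{(j₀,k)}^{p-1}` (where `d j₀ ≠ 0`) to a nonzero
multiple of `∏_k x_k^{p-1}`. The top degree is a genuine maximum because the orbit product
`∏_{τ ∈ G} (X_v - τ • X_v) = 0` puts every `X_v^{|G|}` into the Hilbert ideal.
-/

namespace MvPolynomial

variable {R σ τ : Type*}

theorem mem_span_range_X_pow_iff [CommSemiring R] {n : ℕ} {f : MvPolynomial σ R} :
    f ∈ Ideal.span (Set.range fun i => (X i : MvPolynomial σ R) ^ n) ↔
      ∀ μ ∈ f.support, ∃ i, n ≤ μ i := by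
  have hrange : (Set.range fun i => (X i : MvPolynomial σ R) ^ n) =
      (fun s => monomial s 1) '' Set.range fun i => Finsupp.single i n := by
    rw [← Set.range_comp]
    simp only [Function.comp_def, X_pow_eq_monomial]
  simp [hrange, mem_ideal_span_monomial_image, Finsupp.single_le_iff]

theorem monomial_notMem_span_range_X_pow [CommSemiring R] {n : ℕ} {μ : σ →₀ ℕ} {a : R}
    (ha : a ≠ 0) (hμ : ∀ i, μ i < n) :
    monomial μ a ∉ Ideal.span (Set.range fun i => (X i : MvPolynomial σ R) ^ n) := by
  classical
  rw [mem_span_range_X_pow_iff, support_monomial, if_neg ha]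
  simpa using hμ

theorem IsHomogeneous.mem_span_range_X_pow [CommSemiring R] [Fintype σ] {n d : ℕ}
    {f : MvPolynomial σ R} (hf : f.IsHomogeneous d) (hd : Fintype.card σ * (n - 1) < d) :
    f ∈ Ideal.span (Set.range fun i => (X i : MvPolynomial σ R) ^ n) := by
  rw [mem_span_range_X_pow_iff]
  intro μ hμ
  by_contra! hlt
  have hdeg : Finsupp.degree μ = d := by
    rw [Finsupp.degree_eq_weight_one]
    exact hf (mem_support_iff.mp hμ)
  have : Finsupp.degree μ ≤ Fintype.card σ * (n - 1) := by
    rw [Finsupp.degree_eq_sum]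
    calc ∑ i, μ i ≤ ∑ _i : σ, (n - 1) := Finset.sum_le_sum fun i _ => Nat.le_sub_one_of_lt (hlt i)
      _ = Fintype.card σ * (n - 1) := by simp
  omega

theorem mem_span_range_X_pow_of_pderiv_eq_zero [CommRing R] [NoZeroDivisors R] (p : ℕ)
    [CharP R p] {f : MvPolynomial σ R} (h0 : coeff 0 f = 0) (hf : ∀ i, pderiv i f = 0) :
    f ∈ Ideal.span (Set.range fun i => (X i : MvPolynomial σ R) ^ p) := by
  rw [mem_span_range_X_pow_iff]
  intro μ hμ
  obtain ⟨i, hi⟩ : ∃ i, μ i ≠ 0 := by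
    by_contra! h
    exact mem_support_iff.mp hμ (by rwa [show μ = 0 from Finsupp.ext h])
  have hi' : 1 ≤ μ i := Nat.one_le_iff_ne_zero.mpr hi
  have hcoeff := coeff_pderiv (i := i) f (μ - Finsupp.single i 1)
  rw [hf, coeff_zero, tsub_add_cancel_of_le (Finsupp.single_le_iff.mpr hi'), Finsupp.tsub_apply,
    Finsupp.single_eq_same, ← Nat.cast_add_one, Nat.sub_add_cancel hi'] at hcoeff
  have hcast : ((μ i : ℕ) : R) = 0 :=
    (mul_eq_zero.mp hcoeff.symm).resolve_left (mem_support_iff.mp hμ)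
  exact ⟨i, Nat.le_of_dvd (Nat.pos_of_ne_zero hi) ((CharP.cast_eq_zero_iff R p _).mp hcast)⟩

theorem pderiv_aeval [CommRing R] [Fintype σ] [DecidableEq σ] [DecidableEq τ]
    (g : σ → MvPolynomial τ R) (i : τ) (f : MvPolynomial σ R) :
    pderiv i (aeval g f) = ∑ j, aeval g (pderiv j f) * pderiv i (g j) := by
  induction f using MvPolynomial.induction_on with
  | C a => simp
  | add f₁ f₂ h₁ h₂ => simp only [map_add, h₁, h₂, add_mul, Finset.sum_add_distrib]
  | mul_X f j h =>
    simp only [map_mul, aeval_X, Derivation.leibniz, smul_eq_mul, h, pderiv_X, map_add, add_mul,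
      Finset.sum_add_distrib, Finset.mul_sum, mul_assoc]
    simp [Pi.single_apply, mul_comm]

noncomputable def shear (σ R : Type*) [CommRing R] : σ ⊕ σ → MvPolynomial (σ ⊕ σ) R :=
  Sum.elim (fun k => X (.inl k) + X (.inr k)) (fun k => X (.inr k))

theorem pderiv_aeval_sumElim_eq_zero_of_aeval_shear_eq [CommRing R] [Fintype σ] [DecidableEq σ]
    {g : MvPolynomial (σ ⊕ σ) R} (hg : aeval (shear σ R) g = g) (k : σ) :
    pderiv k (aeval (Sum.elim X 0 : σ ⊕ σ → MvPolynomial σ R) g) = 0 := by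
  have hzero : (Sum.elim X 0 : σ ⊕ σ → MvPolynomial σ R) = Sum.elim X (C ∘ 0) := by
    ext1 (j | j) <;> simp
  rw [hzero, ← aeval_sumElim_pderiv_inl]
  set ε : MvPolynomial (σ ⊕ σ) R →ₐ[R] MvPolynomial σ R := aeval (Sum.elim X (C ∘ 0))
  have hε : ε.comp (aeval (shear σ R)) = ε := by
    ext (j | j) <;> simp [ε, shear]
  have hchain : pderiv (.inr k) g =
      aeval (shear σ R) (pderiv (.inl k) g) + aeval (shear σ R) (pderiv (.inr k) g) := by
    conv_lhs => rw [← hg, pderiv_aeval]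
    simp [Fintype.sum_sum_type, shear, pderiv_X, Pi.single_apply, Finset.sum_ite_eq']
  have := congrArg ε hchain
  rwa [map_add, ← AlgHom.comp_apply, ← AlgHom.comp_apply, hε, right_eq_add] at this

variable [CommSemiring R] [Fintype σ]

noncomputable def linSubst (A : Matrix σ σ R) : MvPolynomial σ R →ₐ[R] MvPolynomial σ R :=
  aeval fun i => ∑ j, A i j • X j

theorem linSubst_X (A : Matrix σ σ R) (i : σ) : linSubst A (X i) = ∑ j, A i j • X j :=
  aeval_X _ _

theorem linSubst_one [DecidableEq σ] : linSubst (1 : Matrix σ σ R) = AlgHom.id R _ := by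
  ext i
  simp [linSubst_X, Matrix.one_apply]

theorem linSubst_comp_linSubst (A B : Matrix σ σ R) :
    (linSubst A).comp (linSubst B) = linSubst (B * A) := by
  refine algHom_ext fun i => ?_
  simp only [AlgHom.comp_apply, linSubst_X, map_sum, map_smul, Finset.smul_sum, smul_smul,
    Matrix.mul_apply, Finset.sum_smul]
  exact Finset.sum_comm

theorem IsHomogeneous.linSubst {f : MvPolynomial σ R} {d : ℕ} (hf : f.IsHomogeneous d)
    (A : Matrix σ σ R) : (linSubst A f).IsHomogeneous d := by
  have := hf.aeval (fun i => ∑ j, A i j • (X j : MvPolynomial σ R)) fun i =>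
    IsHomogeneous.sum _ _ _ fun j _ => by
      simpa only [smul_eq_C_mul] using isHomogeneous_C_mul_X (A i j) j
  rwa [one_mul] at this

end MvPolynomial

open scoped Matrix

namespace Matrix

variable {R κ : Type*} [CommRing R] [Fintype κ] [DecidableEq κ]

theorem isNilpotent_sub_one_of_pow_eq_one (p : ℕ) [Fact p.Prime] [CharP R p] {M : Matrix κ κ R}
    (hM : M ^ p = 1) : IsNilpotent (M - 1) := by
  cases isEmpty_or_nonempty κ
  · exact isNilpotent_of_subsingleton
  · exact ⟨p, by rw [sub_pow_char_of_commute p (Commute.one_right M), hM, one_pow, sub_self]⟩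

theorem exists_mulVec_eq_add_and_mulVec_eq_self {M : Matrix κ κ R} (hM : M ≠ 1)
    (hnil : IsNilpotent (M - 1)) : ∃ c d : κ → R, d ≠ 0 ∧ M *ᵥ c = c + d ∧ M *ᵥ d = d := by
  set N := M - 1
  have hN : N ≠ 0 := sub_ne_zero.mpr hM
  have : Nontrivial (Matrix κ κ R) := nontrivial_of_ne N 0 hN
  set n := nilpotencyClass N
  have hn : 2 ≤ n := by
    have h0 : 0 < n := pos_nilpotencyClass_iff.mpr hnil
    have h1 : n ≠ 1 := by simpa [n] using hN
    omega
  obtain ⟨w, hw⟩ : ∃ w, N ^ (n - 1) *ᵥ w ≠ 0 := by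
    by_contra! h
    exact pow_pred_nilpotencyClass hnil (ext_of_mulVec_single fun j => by rw [h, zero_mulVec])
  have hM1 : M = 1 + N := by simp [N]
  refine ⟨N ^ (n - 2) *ᵥ w, N ^ (n - 1) *ᵥ w, hw, ?_, ?_⟩
  · rw [hM1, add_mulVec, one_mulVec, mulVec_mulVec, ← pow_succ', show n - 2 + 1 = n - 1 by omega]
  · rw [hM1, add_mulVec, one_mulVec, mulVec_mulVec, ← pow_succ', show n - 1 + 1 = n by omega,
      pow_nilpotencyClass hnil, zero_mulVec, add_zero]

end Matrix

theorem polyAct_eq_linSubst (ρ : G →* (Matrix ι ι F)ˣ) (σ : G) (f : MvPolynomial ι F) :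
    polyAct ρ σ f = linSubst (ρ σ⁻¹ : Matrix ι ι F) f :=
  rfl

theorem polyAct_one (ρ : G →* (Matrix ι ι F)ˣ) (f : MvPolynomial ι F) : polyAct ρ 1 f = f := by
  rw [polyAct_eq_linSubst, inv_one, map_one, Units.val_one, linSubst_one, AlgHom.id_apply]

theorem polyAct_polyAct (ρ : G →* (Matrix ι ι F)ˣ) (σ τ : G) (f : MvPolynomial ι F) :
    polyAct ρ σ (polyAct ρ τ f) = polyAct ρ (σ * τ) f := by
  simp only [polyAct_eq_linSubst, ← AlgHom.comp_apply, linSubst_comp_linSubst, ← Units.val_mul,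
    ← map_mul, mul_inv_rev]

theorem MvPolynomial.IsHomogeneous.polyAct (ρ : G →* (Matrix ι ι F)ˣ) (σ : G)
    {f : MvPolynomial ι F} {d : ℕ} (hf : f.IsHomogeneous d) : (polyAct ρ σ f).IsHomogeneous d :=
  hf.linSubst _

theorem mem_hilbertIdeal_of_isInv (ρ : G →* (Matrix ι ι F)ˣ) {f : MvPolynomial ι F} {d : ℕ}
    (hd : 0 < d) (hf : f.IsHomogeneous d) (hinv : IsInv ρ f) : f ∈ hilbertIdeal ρ :=
  Ideal.subset_span ⟨⟨d, hd, hf⟩, hinv⟩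

section

variable [Fintype G] (ρ : G →* (Matrix ι ι F)ˣ) (v : ι)

theorem isInv_esymm_orbit (j : ℕ) :
    IsInv ρ ((Finset.univ.val.map fun σ => polyAct ρ σ (X v)).esymm j) := by
  intro τ
  rw [← aeval_esymm_eq_multiset_esymm G F, polyAct_eq_linSubst, comp_aeval_apply]
  have : (fun σ => linSubst (ρ τ⁻¹ : Matrix ι ι F) (polyAct ρ σ (X v))) =
      (fun σ => polyAct ρ σ (X v)) ∘ Equiv.mulLeft τ := by
    ext1 σ
    exact polyAct_polyAct ρ τ σ (X v)
  rw [this, ← aeval_rename, esymm_isSymmetric]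

theorem isHomogeneous_esymm_orbit (j : ℕ) :
    ((Finset.univ.val.map fun σ => polyAct ρ σ (X v)).esymm j).IsHomogeneous j := by
  rw [Finset.esymm_map_val]
  refine IsHomogeneous.sum _ _ _ fun t ht => ?_
  have := IsHomogeneous.prod t _ (fun _ => 1) fun σ _ => (isHomogeneous_X F v).polyAct ρ σ
  simpa [(Finset.mem_powersetCard.mp ht).2] using this

theorem X_pow_card_mem_hilbertIdeal : X v ^ Fintype.card G ∈ hilbertIdeal ρ := by
  set s := Finset.univ.val.map fun σ => polyAct ρ σ (X v)
  have hcard : s.card = Fintype.card G := by simp [s]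
  have hvieta : ∑ j ∈ Finset.range (Fintype.card G + 1),
      (-1) ^ j * (s.esymm j * X v ^ (Fintype.card G - j)) = 0 := by
    have := congrArg (Polynomial.eval (X v)) (Multiset.prod_X_sub_X_eq_sum_esymm s)
    simp only [Polynomial.eval_multiset_prod, Multiset.map_map, Function.comp_def,
      Polynomial.eval_sub, Polynomial.eval_X, Polynomial.eval_C, Polynomial.eval_finsetSum,
      Polynomial.eval_mul, Polynomial.eval_pow, Polynomial.eval_neg, Polynomial.eval_one,
      hcard] at this
    rw [← this]
    refine Multiset.prod_eq_zero (Multiset.mem_map.mpr ⟨X v, ?_, sub_self _⟩)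
    exact Multiset.mem_map.mpr ⟨1, Finset.mem_univ_val _, polyAct_one ρ (X v)⟩
  have hesymm0 : s.esymm 0 = 1 := by simp [Multiset.esymm]
  rw [Finset.sum_range_succ', pow_zero, one_mul, Nat.sub_zero, hesymm0, one_mul,
    add_eq_zero_iff_neg_eq] at hvieta
  rw [← hvieta]
  refine neg_mem (Ideal.sum_mem _ fun j _ => Ideal.mul_mem_left _ _ (Ideal.mul_mem_right _ _ ?_))
  exact mem_hilbertIdeal_of_isInv ρ j.succ_pos (isHomogeneous_esymm_orbit ρ v _)
    (isInv_esymm_orbit ρ v _)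

theorem bddAbove_topDeg_set :
    BddAbove {d | ∃ f : MvPolynomial ι F, f.IsHomogeneous d ∧ f ∉ hilbertIdeal ρ} := by
  refine ⟨Fintype.card ι * (Fintype.card G - 1), fun d ⟨f, hf, hnot⟩ => not_lt.mp fun hd => hnot ?_⟩
  refine Ideal.span_le.mpr ?_ (IsHomogeneous.mem_span_range_X_pow hf hd)
  exact Set.range_subset_iff.mpr (X_pow_card_mem_hilbertIdeal ρ)

theorem le_topDeg {f : MvPolynomial ι F} {d : ℕ} (hf : f.IsHomogeneous d)
    (hnot : f ∉ hilbertIdeal ρ) : d ≤ topDeg ρ :=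
  le_csSup (bddAbove_topDeg_set ρ) ⟨f, hf, hnot⟩

end

theorem polyAct_glPow_X (ρ : G →* (Matrix ι ι F)ˣ) (m : ℕ) (σ : G) (j : ι) (k : Fin m) :
    polyAct (glPow ρ m) σ (X (j, k)) = ∑ j', (ρ σ⁻¹ : Matrix ι ι F) j j' • X (j', k) := by
  rw [polyAct_eq_linSubst, linSubst_X, Fintype.sum_prod_type]
  refine Finset.sum_congr rfl fun j' _ => ?_
  simp [glPow, Matrix.blockDiagonal_apply]

/-- Pulls back polynomials on `V^m` along `(x, y) ↦ (x_k • d + y_k • c)_k`, where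
`x_k = X (inl k)` and `y_k = X (inr k)`. -/
noncomputable def pairSubst {R ι κ : Type*} [CommSemiring R] (c d : ι → R) :
    ι × κ → MvPolynomial (κ ⊕ κ) R :=
  fun v => C (d v.1) * X (.inl v.2) + C (c v.1) * X (.inr v.2)

theorem aeval_pairSubst_polyAct_glPow (ρ : G →* (Matrix ι ι F)ˣ) (m : ℕ) (σ : G) {c d : ι → F}
    (hc : (ρ σ⁻¹ : Matrix ι ι F) *ᵥ c = c + d) (hd : (ρ σ⁻¹ : Matrix ι ι F) *ᵥ d = d)
    (f : MvPolynomial (ι × Fin m) F) :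
    aeval (pairSubst c d) (polyAct (glPow ρ m) σ f) =
      aeval (shear (Fin m) F) (aeval (pairSubst c d) f) := by
  suffices (aeval (pairSubst c d)).comp (linSubst (glPow ρ m σ⁻¹ : Matrix _ _ F)) =
      (aeval (shear (Fin m) F)).comp (aeval (pairSubst c d)) from AlgHom.congr_fun this f
  refine algHom_ext fun ⟨j, k⟩ => ?_
  have hcj := congrFun hc j
  have hdj := congrFun hd j
  simp only [Matrix.mulVec, dotProduct, Pi.add_apply] at hcj hdj
  rw [AlgHom.comp_apply, ← polyAct_eq_linSubst, polyAct_glPow_X, map_sum]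
  simp only [AlgHom.comp_apply, aeval_X, pairSubst, shear, Sum.elim_inl, Sum.elim_inr, map_add,
    map_mul, aeval_C, algebraMap_eq, map_smul]
  simp only [smul_eq_C_mul, mul_add, ← mul_assoc, ← C_mul, Finset.sum_add_distrib,
    ← Finset.sum_mul]
  rw [← map_sum, ← map_sum, hcj, hdj, C_add]
  ring

theorem hilbertIdeal_glPow_le_comap (ρ : G →* (Matrix ι ι F)ˣ) (m p : ℕ) [CharP F p] {σ : G}
    {c d : ι → F} (hc : (ρ σ⁻¹ : Matrix ι ι F) *ᵥ c = c + d)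
    (hd : (ρ σ⁻¹ : Matrix ι ι F) *ᵥ d = d) :
    hilbertIdeal (glPow ρ m) ≤ Ideal.comap (aeval fun v : ι × Fin m => C (d v.1) * X v.2)
      (Ideal.span (Set.range fun k => X k ^ p)) := by
  have hrestrict : aeval (fun v : ι × Fin m => C (d v.1) * X v.2) =
      (aeval (Sum.elim X 0)).comp (aeval (pairSubst c d)) := by
    rw [comp_aeval]
    congr 1
    ext1 v
    simp [pairSubst]
  refine Ideal.span_le.mpr ?_
  rintro f ⟨⟨e, he, hf⟩, hinv⟩
  have hshear : aeval (shear (Fin m) F) (aeval (pairSubst c d) f) = aeval (pairSubst c d) f := by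
    rw [← aeval_pairSubst_polyAct_glPow ρ m σ hc hd, hinv σ]
  have hhom := hf.aeval (fun v : ι × Fin m => C (d v.1) * X v.2) (n := 1) fun v =>
    isHomogeneous_C_mul_X _ _
  rw [one_mul] at hhom
  rw [SetLike.mem_coe, Ideal.mem_comap]
  refine mem_span_range_X_pow_of_pderiv_eq_zero p (hhom.coeff_eq_zero (by rw [map_zero]; exact he.ne)) ?_
  rw [hrestrict, AlgHom.comp_apply]
  exact pderiv_aeval_sumElim_eq_zero_of_aeval_shear_eq hshear

theorem prod_X_pow_notMem_hilbertIdeal_glPow (ρ : G →* (Matrix ι ι F)ˣ) (m p : ℕ) [CharP F p]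
    (hp : 0 < p) {σ : G} {c d : ι → F} (hc : (ρ σ⁻¹ : Matrix ι ι F) *ᵥ c = c + d)
    (hd : (ρ σ⁻¹ : Matrix ι ι F) *ᵥ d = d) {j₀ : ι} (hj₀ : d j₀ ≠ 0) :
    ∏ k : Fin m, X (j₀, k) ^ (p - 1) ∉ hilbertIdeal (glPow ρ m) := fun hmem => by
  have himage := hilbertIdeal_glPow_le_comap ρ m p hc hd hmem
  rw [Ideal.mem_comap, map_prod] at himage
  simp only [map_pow, aeval_X] at himage
  simp only [mul_pow, ← C_pow, C_mul_X_pow_eq_monomial, ← monomial_sum_prod] at himage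
  refine monomial_notMem_span_range_X_pow
    (Finset.prod_ne_zero_iff.mpr fun _ _ => pow_ne_zero _ hj₀) (fun k => ?_) himage
  simp only [Finsupp.coe_finsetSum, Finset.sum_apply, Finsupp.single_apply, Finset.sum_ite_eq',
    Finset.mem_univ, if_true]
  omega

theorem exists_mulVec_eq_add_and_mulVec_eq_self_of_prime_dvd_card [Fintype G]
    (ρ : G →* (Matrix ι ι F)ˣ) (p : ℕ) [Fact p.Prime] [CharP F p] (hdvd : p ∣ Fintype.card G)
    (hfaithful : Function.Injective ρ) :
    ∃ σ : G, ∃ c d : ι → F, d ≠ 0 ∧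
      (ρ σ⁻¹ : Matrix ι ι F) *ᵥ c = c + d ∧ (ρ σ⁻¹ : Matrix ι ι F) *ᵥ d = d := by
  obtain ⟨σ, hσ⟩ := exists_prime_orderOf_dvd_card p hdvd
  have hσ1 : σ⁻¹ ≠ 1 := by
    rw [Ne, inv_eq_one]
    rintro rfl
    exact (Fact.out : p.Prime).ne_one (hσ.symm.trans orderOf_one)
  have hM : (ρ σ⁻¹ : Matrix ι ι F) ≠ 1 := fun h =>
    hσ1 (hfaithful (by rw [map_one]; exact Units.val_eq_one.mp h))
  have hMp : (ρ σ⁻¹ : Matrix ι ι F) ^ p = 1 := by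
    rw [← Units.val_pow_eq_pow_val, ← map_pow, inv_pow, ← hσ, pow_orderOf_eq_one, inv_one,
      map_one, Units.val_one]
  exact ⟨σ, Matrix.exists_mulVec_eq_add_and_mulVec_eq_self hM
    (Matrix.isNilpotent_sub_one_of_pow_eq_one p hMp)⟩

/-- In the modular case (`char F = p > 0` divides `|G|`), for a
faithful `G`-module `V` one has `topdeg F[V^m]_G ≥ m(p-1)` for all `m ≥ 1`. -/
theorem topDeg_glPow_ge [Fintype G] (p : ℕ) [CharP F p] (hp : p ≠ 0)
    (hdvd : p ∣ Fintype.card G) (ρ : G →* (Matrix ι ι F)ˣ)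
    (hfaithful : Function.Injective ρ) :
    ∀ m : ℕ, 0 < m → m * (p - 1) ≤ topDeg (glPow ρ m) := by
  intro m _
  have hprime : p.Prime := (CharP.char_is_prime_or_zero F p).resolve_right hp
  have := Fact.mk hprime
  obtain ⟨σ, c, d, hd0, hc, hd⟩ :=
    exists_mulVec_eq_add_and_mulVec_eq_self_of_prime_dvd_card ρ p hdvd hfaithful
  obtain ⟨j₀, hj₀⟩ := Function.ne_iff.mp hd0
  have hwit : (∏ k : Fin m, X (j₀, k) ^ (p - 1) : MvPolynomial (ι × Fin m) F).IsHomogeneous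
      (m * (p - 1)) := by
    simpa using IsHomogeneous.prod (Finset.univ : Finset (Fin m)) _ _ fun k _ =>
      isHomogeneous_X_pow (j₀, k) (p - 1)
  exact le_topDeg _ hwit (prod_X_pow_notMem_hilbertIdeal_glPow ρ m p hprime.pos hc hd hj₀)
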